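/- For the lazy dispersion process with parameter p (0 < p ≤ 1, possibly depending on n) and M = (1−δ)n particles on the complete graph K_n with loops: if δ = p/2 + α for some α > 0 (possibly depending on n), then there is an absolute constant C such that with probability at least 1 − C/n the dispersion time satisfies T_Disp ≤ C·(pα)^{−1}·log n. -/

import Mathlib

/-!
Track the surplus `Φ(c) = ∑_v (|c⁻¹(v)| - 1)`, the number of particles in excess of one per
vertex; it is at least `1` until the particles are dispersed. After one step, every excess
particle at a vertex either stayed there with its coin showing `false` behind an earlier
particle of the same vertex that did the same, or jumped onto a vertex that some other particle
occupies after the step. At a vertex holding `k ≥ 2` particles the first kind has expected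
number `(1 - p) ∑_{r < k} (1 - p^r) = k(1 - p) - (1 - p^k)`, while each of the `k` particles
lands on the new position of a given other particle with probability `p/n`, that position
being independent of its own jump. With `M - 1 ≤ (1 - p/2 - α) n` this gives
`E[Φ'] ≤ (1 - pα) Φ`, so `E[Φ_T] ≤ (1 - pα)^T M ≤ 1/n` for `T = ⌈2 log n / (pα)⌉`, and
Markov's inequality finishes.
-/

open MeasureTheory ProbabilityTheory
open scoped Classical BigOperators

/-- The lazy dispersion process on the complete graph `K_n` with loops, with `M`
particles all starting at the origin vertex `o`.  At each step an unhappy particle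
(one sharing its vertex with another particle) moves iff its coin `B t i` shows `true`,
in which case it jumps to the uniformly random vertex `X t i ∈ [n]` (possibly its
current one); happy particles, and unhappy particles whose coin shows `false`, stay. -/
noncomputable def lazyPos {n M : ℕ} (o : Fin n) (X : ℕ → Fin M → Fin n)
    (B : ℕ → Fin M → Bool) : ℕ → Fin M → Fin n
  | 0 => fun _ => o
  | t + 1 => fun i =>
      if (∃ j, j ≠ i ∧ lazyPos o X B t j = lazyPos o X B t i) ∧ B t i = true then
        X t i
      else lazyPos o X B t i

namespace LazyDispersion

open Finset

section ProductWeight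

variable {ι A : Type*} [Fintype ι] [DecidableEq ι] [Fintype A] (w : A → ℝ)

noncomputable def piExpect (f : (ι → A) → ℝ) : ℝ := ∑ y, (∏ k, w (y k)) * f y

variable {w}

theorem piExpect_mono (hw : ∀ a, 0 ≤ w a) {f g : (ι → A) → ℝ} (hfg : ∀ y, f y ≤ g y) :
    piExpect w f ≤ piExpect w g :=
  sum_le_sum fun y _ =>
    mul_le_mul_of_nonneg_left (hfg y) (prod_nonneg fun k _ => hw (y k))

theorem piExpect_const_mul (c : ℝ) (f : (ι → A) → ℝ) :
    piExpect w (fun y => c * f y) = c * piExpect w f := by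
  simp only [piExpect, mul_sum, mul_left_comm]

theorem piExpect_sub (f g : (ι → A) → ℝ) :
    piExpect w (fun y => f y - g y) = piExpect w f - piExpect w g := by
  simp only [piExpect, mul_sub, sum_sub_distrib]

theorem piExpect_add (f g : (ι → A) → ℝ) :
    piExpect w (fun y => f y + g y) = piExpect w f + piExpect w g := by
  simp only [piExpect, mul_add, sum_add_distrib]

theorem piExpect_sum {κ : Type*} (s : Finset κ) (f : κ → (ι → A) → ℝ) :
    piExpect w (fun y => ∑ a ∈ s, f a y) = ∑ a ∈ s, piExpect w (f a) := by
  simp only [piExpect, mul_sum]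
  exact sum_comm

theorem piExpect_prod (hw : ∑ a, w a = 1) (s : Finset ι) (f : ι → A → ℝ) :
    piExpect w (fun y => ∏ j ∈ s, f j (y j)) = ∏ j ∈ s, ∑ a, w a * f j a := by
  have key : ∀ y : ι → A, (∏ k, w (y k)) * ∏ j ∈ s, f j (y j)
      = ∏ k, w (y k) * if k ∈ s then f k (y k) else 1 := by
    intro y
    rw [prod_mul_distrib, prod_ite_mem, univ_inter]
  rw [piExpect, sum_congr rfl fun y _ => key y,
    ← Fintype.prod_sum fun k a => w a * if k ∈ s then f k a else 1]
  simp_rw [mul_ite, mul_one, sum_ite_irrel, hw]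
  rw [prod_ite_mem, univ_inter]

theorem piExpect_apply_one (hw : ∑ a, w a = 1) (i : ι) (f : A → ℝ) :
    piExpect w (fun y => f (y i)) = ∑ a, w a * f a := by
  simpa using piExpect_prod hw {i} (fun _ => f)

theorem piExpect_apply_two (hw : ∑ a, w a = 1) {i j : ι} (hij : i ≠ j) (f : A → A → ℝ) :
    piExpect w (fun y => f (y i) (y j)) = ∑ a, ∑ b, w a * w b * f a b := by
  have hij' : i ∉ ({j} : Finset ι) := by simpa using hij
  let δ : A → A → ι → A → ℝ := fun a b k c => if c = (if k = i then a else b) then 1 else 0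
  have key : (fun y : ι → A => f (y i) (y j)) =
      fun y => ∑ a, ∑ b, f a b * ∏ k ∈ {i, j}, δ a b k (y k) := by
    ext y
    simp [δ, prod_insert hij', hij.symm]
  rw [key]
  simp_rw [piExpect_sum, piExpect_const_mul, piExpect_prod hw, prod_insert hij']
  simp [δ, hij.symm, mul_comm, mul_left_comm]

theorem piExpect_snoc {t : ℕ} (f : (Fin (t + 1) → A) → ℝ) :
    piExpect w f = piExpect w (fun z => ∑ a, w a * f (Fin.snoc z a)) := by
  simp only [piExpect, mul_sum]
  rw [sum_comm, ← Fintype.sum_prod_type']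
  refine Fintype.sum_equiv (Fin.snocEquiv fun _ => A).symm _ _ fun y => ?_
  simp [Fin.snocEquiv, Fin.prod_univ_castSucc, Fin.init]
  ring

end ProductWeight

section Iteration

variable {S B : Type*}

def run (f : S → B → S) (s₀ : S) : (t : ℕ) → (Fin t → B) → S
  | 0, _ => s₀
  | t + 1, z => f (run f s₀ t (Fin.init z)) (z (Fin.last t))

theorem piExpect_run_le [Fintype B] {w : B → ℝ} (hw : ∀ b, 0 ≤ w b) {f : S → B → S}
    {V : S → ℝ} {r : ℝ} (hr : 0 ≤ r) (hdrift : ∀ s, ∑ b, w b * V (f s b) ≤ r * V s)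
    (s₀ : S) (t : ℕ) :
    piExpect w (fun z : Fin t → B => V (run f s₀ t z)) ≤ r ^ t * V s₀ := by
  induction t with
  | zero => simp [piExpect, run]
  | succ t ih =>
    calc piExpect w (fun z : Fin (t + 1) → B => V (run f s₀ (t + 1) z))
        = piExpect w (fun z => ∑ b, w b * V (f (run f s₀ t z) b)) := by
          simp [piExpect_snoc, run]
      _ ≤ piExpect w (fun z => r * V (run f s₀ t z)) := piExpect_mono hw fun z => hdrift _
      _ ≤ r ^ (t + 1) * V s₀ := by
          rw [piExpect_const_mul, pow_succ', mul_assoc]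
          exact mul_le_mul_of_nonneg_left ih hr

end Iteration

section Dynamics

variable {n M : ℕ}

def IsUnhappy (c : Fin M → Fin n) (i : Fin M) : Prop := ∃ j, j ≠ i ∧ c j = c i

noncomputable def move (c : Fin M → Fin n) (i : Fin M) (b : Fin n × Bool) : Fin n :=
  if IsUnhappy c i ∧ b.2 = true then b.1 else c i

noncomputable def step (c : Fin M → Fin n) (y : Fin M → Fin n × Bool) : Fin M → Fin n :=
  fun i => move c i (y i)

theorem lazyPos_eq_run (o : Fin n) (X : ℕ → Fin M → Fin n) (B : ℕ → Fin M → Bool) (t : ℕ) :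
    lazyPos o X B t = run step (fun _ => o) t (fun s i => (X s i, B s i)) := by
  induction t with
  | zero => rfl
  | succ t ih =>
    have hinit : Fin.init (fun (s : Fin (t + 1)) i => (X s i, B s i)) =
        fun (s : Fin t) i => (X s i, B s i) := rfl
    funext i
    simp only [lazyPos, run, hinit, ← ih, step, move, IsUnhappy, Fin.val_last]

-- Truncated subtraction: empty vertices contribute `0`, not `-1`.
def surplus (c : Fin M → Fin n) : ℕ := ∑ v, (#{i | c i = v} - 1)

theorem surplus_le_card (c : Fin M → Fin n) : surplus c ≤ M := by
  calc surplus c ≤ ∑ v, #{i | c i = v} := sum_le_sum fun v _ => Nat.sub_le _ _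
    _ = M := by
        rw [← card_eq_sum_card_fiberwise fun i _ => mem_univ (c i), card_univ, Fintype.card_fin]

theorem one_le_surplus {c : Fin M → Fin n} (hc : ¬ Function.Injective c) : 1 ≤ surplus c := by
  obtain ⟨i, j, hij, hne⟩ := Function.not_injective_iff.mp hc
  have h2 : 2 ≤ #{k | c k = c i} := by
    calc 2 = #{i, j} := (card_pair hne).symm
      _ ≤ #{k | c k = c i} := card_le_card fun k hk => by
          rcases mem_insert.mp hk with rfl | hk
          · simp
          · simp [mem_singleton.mp hk, hij]
  calc 1 ≤ #{k | c k = c i} - 1 := by omega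
    _ ≤ surplus c := single_le_sum (f := fun v => #{k | c k = v} - 1) (fun _ _ => Nat.zero_le _)
        (mem_univ (c i))

def StaysBehind (c : Fin M → Fin n) (y : Fin M → Fin n × Bool) (i : Fin M) : Prop :=
  (y i).2 = false ∧ ∃ j < i, c j = c i ∧ (y j).2 = false

def LandsOnOccupied (c : Fin M → Fin n) (y : Fin M → Fin n × Bool) (i : Fin M) : Prop :=
  IsUnhappy c i ∧ (y i).2 = true ∧ ∃ j ≠ i, step c y j = (y i).1

theorem eq_of_step_eq {c : Fin M → Fin n} {y : Fin M → Fin n × Bool} {i i' : Fin M}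
    (h : step c y i = step c y i') (hi : ¬ (StaysBehind c y i ∨ LandsOnOccupied c y i))
    (hi' : ¬ (StaysBehind c y i' ∨ LandsOnOccupied c y i')) : i = i' := by
  by_contra hne
  have stays : ∀ {k k'}, k ≠ k' → step c y k = step c y k' → ¬ LandsOnOccupied c y k →
      ¬ (IsUnhappy c k ∧ (y k).2 = true) := fun hkk' hkk hk hmv =>
    hk ⟨hmv.1, hmv.2, _, Ne.symm hkk', by rw [← hkk]; simp [step, move, hmv]⟩
  have hmi := stays hne h (not_or.mp hi).2
  have hmi' := stays (Ne.symm hne) h.symm (not_or.mp hi').2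
  have hc : c i = c i' := by simpa [step, move, hmi, hmi'] using h
  have hb : (y i).2 = false := by simpa using fun hb => hmi ⟨⟨i', Ne.symm hne, hc.symm⟩, hb⟩
  have hb' : (y i').2 = false := by simpa using fun hb => hmi' ⟨⟨i, hne, hc⟩, hb⟩
  rcases lt_or_gt_of_ne hne with hlt | hlt
  · exact hi' (Or.inl ⟨hb', i, hlt, hc, hb⟩)
  · exact hi (Or.inl ⟨hb, i', hlt, hc.symm, hb'⟩)

theorem card_sub_one_le_card_filter {α : Type*} (s : Finset α) (P : α → Prop) [DecidablePred P]
    (h : ∀ i ∈ s, ∀ j ∈ s, ¬ P i → ¬ P j → i = j) : #s - 1 ≤ #{i ∈ s | P i} := by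
  have hsplit : #{i ∈ s | P i} + #{i ∈ s | ¬ P i} = #s := card_filter_add_card_filter_not P
  have hle : #{i ∈ s | ¬ P i} ≤ 1 := card_le_one.mpr fun i hi j hj => by
    simp only [mem_filter] at hi hj
    exact h i hi.1 j hj.1 hi.2 hj.2
  omega

theorem surplus_step_le (c : Fin M → Fin n) (y : Fin M → Fin n × Bool) :
    surplus (step c y) ≤ #{i | StaysBehind c y i} + #{i | LandsOnOccupied c y i} := by
  set bad := fun i => StaysBehind c y i ∨ LandsOnOccupied c y i
  calc surplus (step c y) = ∑ v, (#{i | step c y i = v} - 1) := rfl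
    _ ≤ ∑ v, #{i ∈ {i | bad i} | step c y i = v} := sum_le_sum fun v _ => by
        rw [filter_comm]
        refine card_sub_one_le_card_filter _ _ fun i hi j hj hbi hbj => eq_of_step_eq ?_ hbi hbj
        rw [(mem_filter.mp hi).2, (mem_filter.mp hj).2]
    _ = #{i | bad i} := (card_eq_sum_card_fiberwise fun i _ => mem_univ _).symm
    _ ≤ _ := by rw [filter_or]; exact card_union_le _ _

end Dynamics

section Drift

variable {n M : ℕ}

noncomputable def jumpWeight (n : ℕ) (p : ℝ) (b : Fin n × Bool) : ℝ :=
  if b.2 then p / n else (1 - p) / n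

theorem jumpWeight_nonneg {p : ℝ} (hp0 : 0 ≤ p) (hp1 : p ≤ 1) (b : Fin n × Bool) :
    0 ≤ jumpWeight n p b := by
  unfold jumpWeight
  split <;> exact div_nonneg (by linarith) n.cast_nonneg

theorem sum_jumpWeight_mul (p : ℝ) (g : Fin n × Bool → ℝ) :
    ∑ b, jumpWeight n p b * g b = ∑ v, (p * g (v, true) + (1 - p) * g (v, false)) / n := by
  simp only [Fintype.sum_prod_type, Fintype.sum_bool, jumpWeight]
  refine sum_congr rfl fun v _ => ?_
  simp only [ite_true, Bool.false_eq_true, ite_false]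
  ring

theorem sum_jumpWeight (hn : 0 < n) (p : ℝ) : ∑ b, jumpWeight n p b = 1 := by
  simpa [field, hn.ne'] using sum_jumpWeight_mul (n := n) p fun _ => 1

theorem sum_jumpWeight_mul_stay (hn : 0 < n) (p : ℝ) :
    ∑ b, jumpWeight n p b * (if b.2 = false then 1 else 0) = 1 - p := by
  rw [sum_jumpWeight_mul]
  simp [field]

theorem sum_jumpWeight_mul_move (hn : 0 < n) (p : ℝ) :
    ∑ b, jumpWeight n p b * (if b.2 = true then 1 else 0) = p := by
  rw [sum_jumpWeight_mul]
  simp [field]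

theorem piExpect_staysBehind (hn : 0 < n) (p : ℝ) (c : Fin M → Fin n) (i : Fin M) :
    piExpect (jumpWeight n p) (fun y => if StaysBehind c y i then 1 else 0) =
      (1 - p) * (1 - p ^ #{j | j < i ∧ c j = c i}) := by
  set R : Finset (Fin M) := {j | j < i ∧ c j = c i}
  have hiR : i ∉ R := by simp [R]
  let stay : Fin n × Bool → ℝ := fun b => if b.2 = false then 1 else 0
  let mv : Fin n × Bool → ℝ := fun b => if b.2 = true then 1 else 0
  let f : Fin M → Fin n × Bool → ℝ := Function.update (fun _ => mv) i stay
  have hfR : ∀ k ∈ R, f k = mv := fun k hk =>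
    Function.update_of_ne (ne_of_mem_of_not_mem hk hiR) _ _
  have key : (fun y => if StaysBehind c y i then (1 : ℝ) else 0) =
      fun y => stay (y i) - ∏ k ∈ insert i R, f k (y k) := by
    ext y
    rw [prod_insert hiR, prod_congr rfl fun k hk => by rw [hfR k hk]]
    simp only [f, Function.update_self, stay, mv, prod_boole]
    by_cases hi : (y i).2 = false
    · by_cases hall : ∀ k ∈ R, (y k).2 = true
      · have hS : ¬ StaysBehind c y i := fun ⟨_, j, hj, hc, hb⟩ => by
          simpa [hb] using hall j (by simp [R, hj, hc])
        rw [if_neg hS, if_pos hi, if_pos hall]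
        norm_num
      · have hS : StaysBehind c y i := by
          simp only [R, mem_filter, mem_univ, true_and, not_forall] at hall
          obtain ⟨j, ⟨hj, hc⟩, hb⟩ := hall
          exact ⟨hi, j, hj, hc, by simpa using hb⟩
        simp [hS, hi, hall]
    · have hS : ¬ StaysBehind c y i := fun h => hi h.1
      simp [hS, hi]
  have hw := sum_jumpWeight hn p
  rw [key, piExpect_sub, piExpect_apply_one hw, piExpect_prod hw, prod_insert hiR,
    prod_congr rfl fun k hk => by rw [hfR k hk]]
  simp only [f, Function.update_self, stay, mv, sum_jumpWeight_mul_stay hn,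
    sum_jumpWeight_mul_move hn, prod_const]
  ring

theorem piExpect_hit (hn : 0 < n) (p : ℝ) (ψ : Fin n × Bool → Fin n) {i j : Fin M}
    (hij : i ≠ j) :
    piExpect (jumpWeight n p) (fun y => if (y i).2 = true ∧ ψ (y j) = (y i).1 then 1 else 0) =
      p / n := by
  have hw := sum_jumpWeight hn p
  have hland : ∀ v, ∑ a, jumpWeight n p a * (if a.2 = true ∧ v = a.1 then 1 else 0) = p / n := by
    intro v
    rw [sum_jumpWeight_mul]
    simp [← sum_div]
  refine (piExpect_apply_two hw hij fun a b => if a.2 = true ∧ ψ b = a.1 then 1 else 0).trans ?_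
  calc ∑ a, ∑ b, jumpWeight n p a * jumpWeight n p b * _
      = ∑ b, jumpWeight n p b * ∑ a, jumpWeight n p a *
          (if a.2 = true ∧ ψ b = a.1 then 1 else 0) := by
        rw [sum_comm]
        refine sum_congr rfl fun b _ => ?_
        rw [mul_sum]
        exact sum_congr rfl fun a _ => by ring
    _ = p / n := by simp only [hland, ← sum_mul, hw, one_mul]

theorem piExpect_landsOnOccupied_le (hn : 0 < n) {p : ℝ} (hp0 : 0 ≤ p) (hp1 : p ≤ 1)
    (c : Fin M → Fin n) (i : Fin M) :
    piExpect (jumpWeight n p) (fun y => if LandsOnOccupied c y i then 1 else 0) ≤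
      if IsUnhappy c i then ((M : ℝ) - 1) * (p / n) else 0 := by
  split_ifs with hU
  · calc _ ≤ piExpect (jumpWeight n p) (fun y => ∑ j ∈ univ.erase i,
            if (y i).2 = true ∧ move c j (y j) = (y i).1 then 1 else 0) :=
          piExpect_mono (jumpWeight_nonneg hp0 hp1) fun y => by
            split_ifs with hL
            · obtain ⟨-, hb, j, hji, hj⟩ := hL
              have hj1 : (if (y i).2 = true ∧ move c j (y j) = (y i).1 then (1 : ℝ) else 0) = 1 :=
                if_pos ⟨hb, hj⟩
              exact hj1.ge.trans (single_le_sum (f := fun j => if (y i).2 = true ∧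
                move c j (y j) = (y i).1 then (1 : ℝ) else 0) (fun _ _ => by positivity)
                (mem_erase.mpr ⟨hji, mem_univ j⟩))
            · exact sum_nonneg fun _ _ => by positivity
      _ = ∑ j ∈ univ.erase i, p / n := by
          rw [piExpect_sum]
          exact sum_congr rfl fun j hj => piExpect_hit hn p (move c j) (mem_erase.mp hj).1.symm
      _ = ((M : ℝ) - 1) * (p / n) := by
          rw [sum_const, card_erase_of_mem (mem_univ i), card_univ, Fintype.card_fin,
            nsmul_eq_mul, Nat.cast_pred (Fin.pos i)]
  · have hL : ∀ y, ¬ LandsOnOccupied c y i := fun y h => hU h.1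
    simp [hL, piExpect]

theorem sum_mul_pow_card_filter_lt {α : Type*} [LinearOrder α] (p : ℝ) (s : Finset α) :
    ∑ i ∈ s, (1 - p) * p ^ #{j ∈ s | j < i} = 1 - p ^ #s := by
  induction s using Finset.induction_on_max with
  | empty => simp
  | insert a s ha ih =>
    have has : a ∉ s := fun h => lt_irrefl a (ha a h)
    have hlt_a : {j ∈ insert a s | j < a} = s := by
      ext x
      simp only [mem_filter, mem_insert]
      exact ⟨fun ⟨hx, hxa⟩ => hx.resolve_left hxa.ne, fun hx => ⟨Or.inr hx, ha x hx⟩⟩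
    have hlt : ∀ i ∈ s, {j ∈ insert a s | j < i} = {j ∈ s | j < i} := fun i hi => by
      ext x
      simp only [mem_filter, mem_insert]
      refine ⟨fun ⟨hx, hxi⟩ => ⟨hx.resolve_left ?_, hxi⟩, fun ⟨hx, hxi⟩ => ⟨Or.inr hx, hxi⟩⟩
      rintro rfl
      exact lt_asymm hxi (ha i hi)
    rw [sum_insert has, card_insert_of_notMem has, hlt_a, sum_congr rfl fun i hi => by
      rw [hlt i hi], ih]
    ring

theorem fiber_drift_arith {p α T : ℝ} {k : ℕ} (hk : 2 ≤ k) (hp0 : 0 ≤ p) (hp1 : p ≤ 1)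
    (hα : 0 ≤ α) (hT : T ≤ p * (1 - p / 2 - α)) :
    k * (1 - p) - (1 - p ^ k) + k * T ≤ (1 - p * α) * (k - 1 : ℕ) := by
  have hk' : (2 : ℝ) ≤ k := by exact_mod_cast hk
  have hpk : p ^ k ≤ p ^ 2 := pow_le_pow_of_le_one hp0 hp1 hk
  have hkT : k * T ≤ k * (p * (1 - p / 2 - α)) := mul_le_mul_of_nonneg_left hT (by linarith)
  push_cast [show 1 ≤ k by omega]
  nlinarith [mul_nonneg (mul_nonneg (sub_nonneg.mpr hk') hp0) hp0, mul_nonneg hp0 hα]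

theorem sum_fiber_drift_le {p α T : ℝ} (hp0 : 0 ≤ p) (hp1 : p ≤ 1) (hα : 0 ≤ α)
    (hT : T ≤ p * (1 - p / 2 - α)) (c : Fin M → Fin n) (v : Fin n) :
    ∑ i ∈ {i | c i = v}, ((1 - p) * (1 - p ^ #{j | j < i ∧ c j = c i}) +
        if IsUnhappy c i then T else 0) ≤ (1 - p * α) * (#{i | c i = v} - 1 : ℕ) := by
  set s : Finset (Fin M) := {i | c i = v}
  have hrank : ∀ i ∈ s, #{j | j < i ∧ c j = c i} = #{j ∈ s | j < i} := fun i hi => by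
    rw [(mem_filter.mp hi).2, filter_filter]
    simp only [and_comm]
  rcases le_or_gt #s 1 with hs | hs
  · have hzero : ∀ i ∈ s, #{j | j < i ∧ c j = c i} = 0 ∧ ¬ IsUnhappy c i := fun i hi => by
      have hsub : ∀ j, c j = c i → j = i := fun j hj =>
        card_le_one.mp hs j (by simp [s, hj, (mem_filter.mp hi).2]) i hi
      refine ⟨card_eq_zero.mpr (filter_eq_empty_iff.mpr fun j _ h => h.1.ne (hsub j h.2)), ?_⟩
      rintro ⟨j, hji, hj⟩
      exact hji (hsub j hj)
    rw [Nat.sub_eq_zero_of_le hs, sum_eq_zero fun i hi => by simp [hzero i hi]]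
    simp
  · have hU : ∀ i ∈ s, IsUnhappy c i := fun i hi => by
      obtain ⟨j, hj, hji⟩ := exists_mem_ne hs i
      exact ⟨j, hji, (mem_filter.mp hj).2.trans (mem_filter.mp hi).2.symm⟩
    calc _ = #s * (1 - p) - ∑ i ∈ s, (1 - p) * p ^ #{j ∈ s | j < i} + #s * T := by
          have hstay : ∑ i ∈ s, (1 - p) * (1 - p ^ #{j | j < i ∧ c j = c i}) =
              #s * (1 - p) - ∑ i ∈ s, (1 - p) * p ^ #{j ∈ s | j < i} := by
            simp only [mul_sub, mul_one, sum_sub_distrib, sum_const, nsmul_eq_mul]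
            rw [sum_congr rfl fun i hi => by rw [hrank i hi]]
          rw [sum_add_distrib, hstay, sum_congr rfl fun i hi => if_pos (hU i hi), sum_const,
            nsmul_eq_mul]
      _ ≤ _ := by
          rw [sum_mul_pow_card_filter_lt]
          exact fiber_drift_arith hs hp0 hp1 hα hT

theorem piExpect_surplus_step_le (hn : 0 < n) {p α : ℝ} (hp0 : 0 ≤ p) (hp1 : p ≤ 1)
    (hα : 0 ≤ α) (hM : (M : ℝ) ≤ (1 - p / 2 - α) * n) (c : Fin M → Fin n) :
    piExpect (jumpWeight n p) (fun y => (surplus (step c y) : ℝ)) ≤ (1 - p * α) * surplus c := by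
  have hT : ((M : ℝ) - 1) * (p / n) ≤ p * (1 - p / 2 - α) := by
    have hpn : 0 ≤ p / n := by positivity
    calc ((M : ℝ) - 1) * (p / n) ≤ (1 - p / 2 - α) * n * (p / n) :=
          mul_le_mul_of_nonneg_right (by linarith) hpn
      _ = p * (1 - p / 2 - α) := by field_simp
  calc piExpect (jumpWeight n p) (fun y => (surplus (step c y) : ℝ))
      ≤ piExpect (jumpWeight n p) (fun y => ∑ i, ((if StaysBehind c y i then 1 else 0) +
          if LandsOnOccupied c y i then 1 else 0)) :=
        piExpect_mono (jumpWeight_nonneg hp0 hp1) fun y => by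
          rw [sum_add_distrib, ← natCast_card_filter, ← natCast_card_filter]
          exact_mod_cast surplus_step_le c y
    _ ≤ ∑ i, ((1 - p) * (1 - p ^ #{j | j < i ∧ c j = c i}) +
          if IsUnhappy c i then ((M : ℝ) - 1) * (p / n) else 0) := by
        rw [piExpect_sum]
        refine sum_le_sum fun i _ => ?_
        rw [piExpect_add, piExpect_staysBehind hn]
        exact add_le_add le_rfl (piExpect_landsOnOccupied_le hn hp0 hp1 c i)
    _ = ∑ v, ∑ i ∈ {i | c i = v}, ((1 - p) * (1 - p ^ #{j | j < i ∧ c j = c i}) +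
          if IsUnhappy c i then ((M : ℝ) - 1) * (p / n) else 0) :=
        (sum_fiberwise _ _ _).symm
    _ ≤ ∑ v, (1 - p * α) * (#{i | c i = v} - 1 : ℕ) :=
        sum_le_sum fun v _ => sum_fiber_drift_le hp0 hp1 hα hT c v
    _ = (1 - p * α) * surplus c := by
        rw [← mul_sum, surplus, Nat.cast_sum]

end Drift

section Probability

variable {Ω : Type*} [MeasurableSpace Ω] {P : Measure Ω}

theorem measure_forall_eq_of_iIndepFun {κ β : Type*} [Fintype κ] [MeasurableSpace β]
    [MeasurableSingletonClass β] {X : κ → Ω → β} (hind : iIndepFun X P) (z : κ → β) :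
    P {ω | ∀ k, X k ω = z k} = ∏ k, P {ω | X k ω = z k} := by
  have h := hind.measure_inter_preimage_eq_mul univ (sets := fun k => {z k})
    fun k _ => measurableSet_singleton _
  have hset : {ω | ∀ k, X k ω = z k} = ⋂ k ∈ univ, X k ⁻¹' {z k} := by
    ext ω
    simp
  rw [hset, h]
  rfl

theorem measure_trajectory_eq {M : ℕ} {β : Type*} [MeasurableSpace β]
    [MeasurableSingletonClass β] {X : ℕ → Fin M → Ω → β}
    (hind : iIndepFun (fun ti : ℕ × Fin M => X ti.1 ti.2) P) (T : ℕ) (z : Fin T → Fin M → β) :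
    P {ω | (fun (s : Fin T) i => X s i ω) = z} = ∏ s : Fin T, ∏ i, P {ω | X s i ω = z s i} := by
  have hind' : iIndepFun (fun k : Fin T × Fin M => X k.1 k.2) P :=
    hind.precomp (g := fun k : Fin T × Fin M => ((k.1 : ℕ), k.2)) fun k k' h => by
      simp only [Prod.mk.injEq] at h
      exact Prod.ext (Fin.ext h.1) h.2
  have hset : {ω | (fun (s : Fin T) i => X s i ω) = z} =
      {ω | ∀ k : Fin T × Fin M, X k.1 k.2 ω = z k.1 k.2} := by
    ext ω
    simp [funext_iff]
  rw [hset, measure_forall_eq_of_iIndepFun hind', Fintype.prod_prod_type]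

theorem toReal_measure_preimage_le_sum_mul [IsFiniteMeasure P] {β : Type*} [Fintype β]
    [MeasurableSpace β] [MeasurableSingletonClass β] {Z : Ω → β} (hZ : Measurable Z)
    {ρ : β → ℝ} (hρ : ∀ z, (P (Z ⁻¹' {z})).toReal = ρ z) {E : Set β} {V : β → ℝ}
    (hV0 : ∀ z, 0 ≤ V z) (hVE : ∀ z ∈ E, 1 ≤ V z) :
    (P (Z ⁻¹' E)).toReal ≤ ∑ z, ρ z * V z := by
  have hρ0 : ∀ z, 0 ≤ ρ z := fun z => hρ z ▸ ENNReal.toReal_nonneg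
  rw [← E.coe_toFinset,
    ← sum_measure_preimage_singleton _ fun z _ => hZ (measurableSet_singleton z),
    ENNReal.toReal_sum fun z _ => measure_ne_top P _]
  calc ∑ z ∈ E.toFinset, (P (Z ⁻¹' {z})).toReal = ∑ z ∈ E.toFinset, ρ z :=
        sum_congr rfl fun z _ => hρ z
    _ ≤ ∑ z ∈ E.toFinset, ρ z * V z :=
        sum_le_sum fun z hz => le_mul_of_one_le_right (hρ0 z) (hVE z (Set.mem_toFinset.mp hz))
    _ ≤ ∑ z, ρ z * V z :=
        sum_le_sum_of_subset_of_nonneg (subset_univ _) fun z _ _ => mul_nonneg (hρ0 z) (hV0 z)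

theorem measure_injective_lazyPos_ge [IsProbabilityMeasure P] {n M : ℕ} {p α : ℝ}
    (hp0 : 0 ≤ p) (hp1 : p ≤ 1) (hα : 0 ≤ α) (hM : (M : ℝ) ≤ (1 - p / 2 - α) * n)
    {XB : ℕ → Fin M → Ω → Fin n × Bool} (hmeas : ∀ t i, Measurable (XB t i))
    (hlaw : ∀ t i b, (P {ω | XB t i ω = b}).toReal = jumpWeight n p b)
    (hind : iIndepFun (fun ti : ℕ × Fin M => XB ti.1 ti.2) P) (o : Fin n) (T : ℕ) :
    1 - (1 - p * α) ^ T * M ≤ (P {ω | Function.Injective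
      (lazyPos o (fun s j => (XB s j ω).1) (fun s j => (XB s j ω).2) T)}).toReal := by
  have hn : 0 < n := o.pos
  have hα1 : 0 ≤ 1 - p / 2 - α :=
    nonneg_of_mul_nonneg_left (M.cast_nonneg.trans hM) (by exact_mod_cast hn)
  have hr : 0 ≤ 1 - p * α := by nlinarith
  let path : Ω → Fin T → Fin M → Fin n × Bool := fun ω s i => XB s i ω
  have hpath : Measurable path :=
    measurable_pi_lambda _ fun s => measurable_pi_lambda _ fun i => hmeas s i
  have hlaw_path : ∀ z, (P (path ⁻¹' {z})).toReal = ∏ s, ∏ i, jumpWeight n p (z s i) := fun z => by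
    change (P {ω | (fun (s : Fin T) i => XB s i ω) = z}).toReal = _
    simp_rw [measure_trajectory_eq hind, ENNReal.toReal_prod, hlaw]
  let bad : Set (Fin T → Fin M → Fin n × Bool) :=
    {z | ¬ Function.Injective (run step (fun _ => o) T z)}
  have hbad : (P (path ⁻¹' bad)).toReal ≤ (1 - p * α) ^ T * M := by
    calc _ ≤ piExpect (fun y : Fin M → Fin n × Bool => ∏ i, jumpWeight n p (y i))
          (fun z => (surplus (run step (fun _ => o) T z) : ℝ)) :=
          toReal_measure_preimage_le_sum_mul hpath hlaw_path (fun _ => Nat.cast_nonneg _)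
            fun z hz => by exact_mod_cast one_le_surplus hz
      _ ≤ (1 - p * α) ^ T * surplus (fun _ : Fin M => o) :=
          piExpect_run_le (f := step) (V := fun c => (surplus c : ℝ))
            (fun y => prod_nonneg fun i _ => jumpWeight_nonneg hp0 hp1 (y i)) hr
            (fun c => piExpect_surplus_step_le hn hp0 hp1 hα hM c) _ T
      _ ≤ (1 - p * α) ^ T * M :=
          mul_le_mul_of_nonneg_left (by exact_mod_cast surplus_le_card _) (pow_nonneg hr T)
  have hgood : {ω | Function.Injective
      (lazyPos o (fun s j => (XB s j ω).1) (fun s j => (XB s j ω).2) T)} = (path ⁻¹' bad)ᶜ := by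
    ext ω
    simp [bad, path, lazyPos_eq_run]
  rw [hgood, prob_compl_eq_one_sub (hpath (Set.toFinite bad).measurableSet),
    ENNReal.toReal_sub_of_le prob_le_one ENNReal.one_ne_top, ENNReal.toReal_one]
  linarith

end Probability

theorem exists_time_le {x : ℝ} (hx0 : 0 < x) (hx1 : x < 1) {n M : ℕ} (hMn : M < n) :
    ∃ T : ℕ, (T : ℝ) ≤ 4 * (1 / x) * Real.log n ∧ (1 - x) ^ T * M ≤ 1 / n := by
  rcases Nat.eq_zero_or_pos M with rfl | hM
  · refine ⟨0, ?_, by simp⟩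
    rw [Nat.cast_zero]
    exact mul_nonneg (by positivity) (Real.log_natCast_nonneg n)
  have hn2 : (2 : ℝ) ≤ n := by exact_mod_cast (by omega : 2 ≤ n)
  have hn0 : (0 : ℝ) < n := by linarith
  have hlog : 1 / 2 < Real.log n :=
    (by linarith [Real.log_two_gt_d9] : (1 : ℝ) / 2 < Real.log 2).trans_le
      (Real.log_le_log two_pos hn2)
  set L := 2 / x * Real.log n with hL
  have hL1 : 1 ≤ L := by
    rw [hL, div_mul_eq_mul_div, le_div_iff₀ hx0]
    linarith
  refine ⟨⌈L⌉₊, ?_, ?_⟩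
  · have := Nat.ceil_lt_add_one (by linarith : 0 ≤ L)
    have h2L : 4 * (1 / x) * Real.log n = 2 * L := by rw [hL]; ring
    linarith
  · have hxL : 2 * Real.log n ≤ x * ⌈L⌉₊ := by
      calc 2 * Real.log n = x * L := by rw [hL]; field_simp
        _ ≤ x * ⌈L⌉₊ := mul_le_mul_of_nonneg_left (Nat.le_ceil L) hx0.le
    calc (1 - x) ^ ⌈L⌉₊ * M ≤ Real.exp (-x) ^ ⌈L⌉₊ * n :=
          mul_le_mul (pow_le_pow_left₀ (by linarith) (Real.one_sub_le_exp_neg x) _)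
            (by exact_mod_cast hMn.le) (Nat.cast_nonneg _) (by positivity)
      _ ≤ Real.exp (-(2 * Real.log n)) * n := by
          rw [← Real.exp_nat_mul]
          gcongr
          linarith
      _ = 1 / n := by
          rw [Real.exp_neg, two_mul, Real.exp_add, Real.exp_log hn0]
          field_simp

end LazyDispersion

open LazyDispersion in
/-- Lazy dispersion on `K_n` with loops, with `M = (1−δ)n` particles and
`δ = p/2 + α`: with probability at least `1 − C/n` the process disperses within
`C·(pα)⁻¹·log n` steps, for an absolute constant `C`. -/
theorem lazy_dispersion_complete_graph_fast :
    ∃ C : ℝ, 0 < C ∧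
    ∀ (n : ℕ) (p α δ : ℝ), 0 < p → p ≤ 1 → 0 < α → δ = p / 2 + α →
    ∀ M : ℕ, (M : ℝ) = (1 - δ) * n →
    ∀ (Ω : Type) (_ : MeasurableSpace Ω) (P : Measure Ω), IsProbabilityMeasure P →
    ∀ (XB : ℕ → Fin M → Ω → Fin n × Bool) (o : Fin n),
    (∀ t i, Measurable (XB t i)) →
    (∀ t i (v : Fin n), (P {ω | XB t i ω = (v, true)}).toReal = p / n) →
    (∀ t i (v : Fin n), (P {ω | XB t i ω = (v, false)}).toReal = (1 - p) / n) →
    iIndepFun (fun ti : ℕ × Fin M => XB ti.1 ti.2) P →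
    (P {ω | ∃ t : ℕ, (t : ℝ) ≤ C * (1 / (p * α)) * Real.log n ∧
        Function.Injective
          (lazyPos o (fun s j => (XB s j ω).1) (fun s j => (XB s j ω).2) t)}).toReal ≥
      1 - C / n := by
  refine ⟨4, by norm_num, ?_⟩
  intro n p α δ hp hp1 hα hδ M hM Ω _ P _ XB o hmeas htrue hfalse hind
  have hn : (0 : ℝ) < n := by exact_mod_cast o.pos
  have hMle : (M : ℝ) ≤ (1 - p / 2 - α) * n := (hM.trans (by rw [hδ]; ring)).le
  have hMn : M < n := by exact_mod_cast (show (M : ℝ) < n by rw [hM, hδ]; nlinarith)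
  have hα1 : 0 ≤ 1 - p / 2 - α := nonneg_of_mul_nonneg_left ((M.cast_nonneg).trans hMle) hn
  have hpα : p * α < 1 := by nlinarith
  obtain ⟨T, hT, hdecay⟩ := exists_time_le (mul_pos hp hα) hpα hMn
  have hlaw : ∀ t i b, (P {ω | XB t i ω = b}).toReal = jumpWeight n p b := by
    rintro t i ⟨v, _ | _⟩
    exacts [hfalse t i v, htrue t i v]
  have hgood := measure_injective_lazyPos_ge hp.le hp1 hα.le hMle hmeas hlaw hind o T
  calc 1 - 4 / (n : ℝ) ≤ 1 - (1 - p * α) ^ T * M := by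
        have : 1 / (n : ℝ) ≤ 4 / n := by gcongr; norm_num
        linarith
    _ ≤ _ := hgood.trans (ENNReal.toReal_mono (measure_ne_top _ _)
        (measure_mono fun ω hω => Set.mem_ofPred.mpr ⟨T, hT, hω⟩))
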